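/- Fix a real number q > 1 and δ ∈ (0, 1/2]. Then γ(τ/2 + iδ) is the real number 1 + (q^{1/2−δ} + q^{1/2+δ})/(q+1). For every z ∈ ℂ with |Im z| ≤ δ one has |γ(z)| ≤ γ(τ/2 + iδ), and for every real α with −τ/2 < α < τ/2 one has the strict inequality |γ(α + iδ)| < γ(τ/2 + iδ). -/

import Mathlib

/-- `q^w = exp(w log q)`. -/
noncomputable def qpow (q : ℝ) (w : ℂ) : ℂ := Complex.exp (w * (Real.log q : ℂ))

/-- The symbol of the Laplacian: `γ(z) = 1 - (q^{1/2+iz} + q^{1/2-iz})/(q+1)`. -/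
noncomputable def gam (q : ℝ) (z : ℂ) : ℂ :=
  1 - (qpow q (1/2 + Complex.I * z) + qpow q (1/2 - Complex.I * z)) / ((q : ℂ) + 1)

/-- `τ = 2π / log q`. -/
noncomputable def tauq (q : ℝ) : ℝ := 2 * Real.pi / Real.log q

/-!
Write `z = x + iy` and `θ = x log q`. Then
`γ(z) = 1 - (q^{1/2-y} e^{iθ} + q^{1/2+y} e^{-iθ})/(q+1)`, so the triangle inequality bounds `|γ(z)|`
by `1 + (q^{1/2-y} + q^{1/2+y})/(q+1)`, and `q^{1/2-y} + q^{1/2+y} = 2 √q cosh (y log q)` increases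
with `|y|`. At `θ = π` both exponentials equal `-1` and the bound is attained. For real `a, b`,
`|1 - (a e^{iθ} + b e^{-iθ})|² = (1+a+b)² - 2(a+b)(1+cos θ) - 4ab sin² θ`, which is strictly smaller
than `(1+a+b)²` when `a, b > 0` and `cos θ > -1`, i.e. for `|θ| < π`.
-/

open Complex

lemma norm_qpow {q : ℝ} (hq : 0 < q) (w : ℂ) : ‖qpow q w‖ = q ^ w.re := by
  rw [qpow, norm_exp, Real.rpow_def_of_pos hq, mul_comm]
  simp

lemma qpow_eq_rpow_mul_exp {q : ℝ} (hq : 0 < q) (w : ℂ) :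
    qpow q w = ((q ^ w.re : ℝ) : ℂ) * exp ((w.im * Real.log q : ℝ) * I) := by
  rw [qpow, Real.rpow_def_of_pos hq, ofReal_exp, ← exp_add]
  congr 1
  conv_lhs => rw [← re_add_im w]
  push_cast
  ring

lemma rpow_half_sub_add_rpow_half_add {q : ℝ} (hq : 0 < q) (y : ℝ) :
    q ^ ((1:ℝ)/2 - y) + q ^ ((1:ℝ)/2 + y) = 2 * q ^ ((1:ℝ)/2) * Real.cosh (y * Real.log q) := by
  simp only [Real.rpow_def_of_pos hq, Real.cosh_eq, mul_add, mul_sub, Real.exp_add, Real.exp_sub,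
    Real.exp_neg, mul_comm y]
  ring

lemma rpow_half_sub_add_rpow_half_add_le {q : ℝ} (hq : 0 < q) {y δ : ℝ} (hy : |y| ≤ δ) :
    q ^ ((1:ℝ)/2 - y) + q ^ ((1:ℝ)/2 + y) ≤ q ^ ((1:ℝ)/2 - δ) + q ^ ((1:ℝ)/2 + δ) := by
  rw [rpow_half_sub_add_rpow_half_add hq, rpow_half_sub_add_rpow_half_add hq]
  gcongr
  rw [Real.cosh_le_cosh, abs_mul, abs_mul, abs_of_nonneg ((abs_nonneg y).trans hy)]
  gcongr

lemma norm_gam_le {q : ℝ} (hq : 0 < q) (z : ℂ) :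
    ‖gam q z‖ ≤ 1 + (q ^ ((1:ℝ)/2 - z.im) + q ^ ((1:ℝ)/2 + z.im)) / (q + 1) := by
  have hq1 : ‖(q : ℂ) + 1‖ = q + 1 := by norm_cast; exact Real.norm_of_nonneg (by linarith)
  calc ‖gam q z‖
      ≤ 1 + (‖qpow q (1/2 + I * z)‖ + ‖qpow q (1/2 - I * z)‖) / (q + 1) := by
        rw [gam, ← hq1]
        refine (norm_sub_le _ _).trans ?_
        rw [norm_one, norm_div]
        gcongr
        exact norm_add_le _ _
    _ = _ := by simp [norm_qpow hq, sub_eq_add_neg]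

lemma gam_ofReal_add_I_mul {q : ℝ} (hq : 0 < q) (x y : ℝ) :
    gam q (x + I * y) = 1 - (((q ^ ((1:ℝ)/2 - y) : ℝ) : ℂ) * exp ((x * Real.log q : ℝ) * I)
      + ((q ^ ((1:ℝ)/2 + y) : ℝ) : ℂ) * exp (-(x * Real.log q : ℝ) * I)) / (q + 1) := by
  rw [gam, qpow_eq_rpow_mul_exp hq, qpow_eq_rpow_mul_exp hq]
  simp [sub_eq_add_neg]

lemma norm_one_sub_mul_exp_add_mul_exp_sq (a b θ : ℝ) :
    ‖1 - ((a : ℂ) * exp (θ * I) + b * exp (-θ * I))‖ ^ 2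
      = (1 + a + b) ^ 2 - 2 * (a + b) * (1 + Real.cos θ) - 4 * a * b * Real.sin θ ^ 2 := by
  rw [Complex.sq_norm, normSq_apply, ← ofReal_neg, exp_mul_I, exp_mul_I, ← ofReal_cos,
    ← ofReal_sin, ← ofReal_cos, ← ofReal_sin]
  simp only [sub_re, add_re, mul_re, sub_im, add_im, mul_im, ofReal_re, ofReal_im, I_re, I_im,
    one_re, one_im, Real.cos_neg, Real.sin_neg]
  linear_combination (a + b) ^ 2 * Real.sin_sq_add_cos_sq θ

lemma norm_one_sub_mul_exp_add_mul_exp_lt {a b θ : ℝ} (ha : 0 < a) (hb : 0 < b)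
    (hθ : -1 < Real.cos θ) :
    ‖1 - ((a : ℂ) * exp (θ * I) + b * exp (-θ * I))‖ < 1 + a + b := by
  refine lt_of_pow_lt_pow_left₀ 2 (by positivity) ?_
  rw [norm_one_sub_mul_exp_add_mul_exp_sq]
  have : 0 < 2 * (a + b) * (1 + Real.cos θ) := by nlinarith
  nlinarith [mul_nonneg (mul_nonneg ha.le hb.le) (sq_nonneg (Real.sin θ))]

lemma neg_one_lt_cos_of_abs_lt_pi {θ : ℝ} (hθ : |θ| < Real.pi) : -1 < Real.cos θ := by
  simpa [Real.cos_abs] using Real.cos_lt_cos_of_nonneg_of_le_pi (abs_nonneg θ) le_rfl hθ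

lemma norm_gam_ofReal_add_I_mul_lt {q : ℝ} (hq : 0 < q) {x : ℝ} (hx : |x * Real.log q| < Real.pi)
    (y : ℝ) :
    ‖gam q (x + I * y)‖ < 1 + (q ^ ((1:ℝ)/2 - y) + q ^ ((1:ℝ)/2 + y)) / (q + 1) := by
  have := norm_one_sub_mul_exp_add_mul_exp_lt (a := q ^ ((1:ℝ)/2 - y) / (q + 1))
    (b := q ^ ((1:ℝ)/2 + y) / (q + 1)) (by positivity) (by positivity)
    (neg_one_lt_cos_of_abs_lt_pi hx)
  rw [gam_ofReal_add_I_mul hq, add_div, mul_div_right_comm, mul_div_right_comm]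
  convert this using 1
  · push_cast
    ring
  · ring

theorem stmt8_general (q : ℝ) (hq : 1 < q) (δ : ℝ) :
    gam q (((tauq q / 2 : ℝ) : ℂ) + Complex.I * (δ : ℂ)) =
      ((1 + (q ^ ((1:ℝ)/2 - δ) + q ^ ((1:ℝ)/2 + δ)) / (q + 1) : ℝ) : ℂ) ∧
    (∀ z : ℂ, |z.im| ≤ δ →
      ‖gam q z‖ ≤ 1 + (q ^ ((1:ℝ)/2 - δ) + q ^ ((1:ℝ)/2 + δ)) / (q + 1)) ∧
    ∀ α : ℝ, -(tauq q) / 2 < α → α < tauq q / 2 →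
      ‖gam q ((α : ℂ) + Complex.I * (δ : ℂ))‖ <
        1 + (q ^ ((1:ℝ)/2 - δ) + q ^ ((1:ℝ)/2 + δ)) / (q + 1) := by
  have hq0 : 0 < q := one_pos.trans hq
  have hlog : 0 < Real.log q := Real.log_pos hq
  have htau : tauq q / 2 * Real.log q = Real.pi := by
    rw [tauq]
    field_simp
  refine ⟨?_, fun z hz => ?_, fun α h₁ h₂ => ?_⟩
  · rw [gam_ofReal_add_I_mul hq0, htau, exp_pi_mul_I, neg_mul, exp_neg_pi_mul_I]
    push_cast
    ring
  · have := rpow_half_sub_add_rpow_half_add_le hq0 hz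
    exact (norm_gam_le hq0 z).trans (by gcongr)
  · refine norm_gam_ofReal_add_I_mul_lt hq0 ?_ δ
    rw [abs_lt, ← htau]
    constructor <;> nlinarith

/-- For `δ ∈ (0,1/2]`, `γ(τ/2 + iδ)` equals the real number
`1 + (q^{1/2-δ}+q^{1/2+δ})/(q+1)`; moreover `|γ(z)| ≤ γ(τ/2+iδ)` on the strip
`|Im z| ≤ δ`, with strict inequality `|γ(α+iδ)| < γ(τ/2+iδ)` for real
`α ∈ (-τ/2, τ/2)`. -/
theorem stmt8 (q : ℝ) (hq : 1 < q) (δ : ℝ) (hδ : δ ∈ Set.Ioc (0 : ℝ) (1/2)) :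
    gam q (((tauq q / 2 : ℝ) : ℂ) + Complex.I * (δ : ℂ)) =
      ((1 + (q ^ ((1:ℝ)/2 - δ) + q ^ ((1:ℝ)/2 + δ)) / (q + 1) : ℝ) : ℂ) ∧
    (∀ z : ℂ, |z.im| ≤ δ →
      ‖gam q z‖ ≤ 1 + (q ^ ((1:ℝ)/2 - δ) + q ^ ((1:ℝ)/2 + δ)) / (q + 1)) ∧
    ∀ α : ℝ, -(tauq q) / 2 < α → α < tauq q / 2 →
      ‖gam q ((α : ℂ) + Complex.I * (δ : ℂ))‖ <
        1 + (q ^ ((1:ℝ)/2 - δ) + q ^ ((1:ℝ)/2 + δ)) / (q + 1) :=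
  stmt8_general q hq δ
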